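/- Consider the plasma insulin dynamics İ(t) = −n·(I(t) + I_b) + u(t)/V on t ≥ 0 with n ∈ [n̲, n̄] for positive constants n̲ ≤ n̄, and I(t) + I_b ≥ 0 for all t. Let Î be a differentiable estimate signal with |I(t) − Î(t)| ≤ Δ_I and |İ(t) − d/dt Î(t)| ≤ Δ̇_I for all t. Let I_ref be a differentiable reference with 0 ≤ I_ref(t) ≤ κ₂ and |İ_ref(t)| ≤ M_I for all t, let ρ_I(t) = (p_I − q_I)e^{−μ_I t} + q_I be the funnel with 0 < q_I < p_I and μ_I > 0, define the normalized error e_I(t) = (I_ref(t) − Î(t))/ρ_I(t), and set the control u(t) = ū·Ψ(e_I(t)). Suppose |e_I(0)| < 1 and the feasibility conditions hold: (FC3a) ū/V − n̄(κ₂ − q_I + Δ_I + I_b) > M_I + μ_I(p_I − q_I) + Δ̇_I; (FC3b) n̲(q_I − Δ_I + I_b) > M_I + μ_I(p_I − q_I) + Δ̇_I. Then |I_ref(t) − Î(t)| < ρ_I(t) for all t ≥ 0. -/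

import Mathlib

/-!
Barrier argument. If the tracking error `y = I_ref − Î` ever reached `+ρ_I`, the normalized
error would be `1`, the control would saturate at `ū`, and FC3a would force `ẏ < ρ̇_I` there;
if it reached `−ρ_I`, the control would vanish and FC3b would force `−ẏ < ρ̇_I`. Either way
`y` would already have left the funnel just before, so it never reaches the boundary.
-/

open Filter Set Topology Real

theorem HasDerivAt.eventually_nhdsLT_lt_of_neg {g : ℝ → ℝ} {g' x : ℝ} (hg : HasDerivAt g g' x)
    (hg' : g' < 0) : ∀ᶠ t in 𝓝[<] x, g x < g t := by
  have hslope : ∀ᶠ t in 𝓝[<] x, slope g x t < 0 :=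
    (hasDerivAt_iff_tendsto_slope_left_right.1 hg).1.eventually (eventually_lt_nhds hg')
  filter_upwards [hslope, self_mem_nhdsWithin] with t hst (htx : t < x)
  rwa [slope_def_field, div_lt_iff_of_neg (sub_neg.2 htx), zero_mul, sub_pos] at hst

theorem lt_on_Ici_of_deriv_lt_deriv_boundary {f f' B B' : ℝ → ℝ} {a : ℝ}
    (hf : ∀ x ≥ a, HasDerivAt f (f' x) x) (hB : ∀ x ≥ a, HasDerivAt B (B' x) x)
    (ha : f a < B a) (bound : ∀ x ≥ a, f x = B x → f' x < B' x) :
    ∀ x ≥ a, f x < B x := by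
  intro x hx
  have hle : ∀ t ∈ Icc a x, f t ≤ B t :=
    image_le_of_deriv_right_lt_deriv_boundary'
      (fun t ht => (hf t ht.1).continuousAt.continuousWithinAt)
      (fun t ht => (hf t ht.1).hasDerivWithinAt) ha.le
      (fun t ht => (hB t ht.1).continuousAt.continuousWithinAt)
      (fun t ht => (hB t ht.1).hasDerivWithinAt) (fun t ht => bound t ht.1)
  refine (hle x ⟨hx, le_rfl⟩).lt_of_ne fun hfx => ?_
  have hax : a < x := hx.lt_of_ne (by rintro rfl; exact ha.ne hfx)
  have hcross : ∀ᶠ t in 𝓝[<] x, f x - B x < f t - B t :=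
    ((hf x hx).sub (hB x hx)).eventually_nhdsLT_lt_of_neg (sub_neg.2 (bound x hx hfx))
  obtain ⟨t, hft, ht⟩ := (hcross.and (Ioo_mem_nhdsLT hax)).exists
  linarith [hle t (Ioo_subset_Icc_self ht)]

theorem abs_lt_on_Ici_of_deriv_lt_deriv_boundary {y y' ρ ρ' : ℝ → ℝ} {a : ℝ}
    (hy : ∀ x ≥ a, HasDerivAt y (y' x) x) (hρ : ∀ x ≥ a, HasDerivAt ρ (ρ' x) x)
    (ha : |y a| < ρ a) (hupper : ∀ x ≥ a, y x = ρ x → y' x < ρ' x)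
    (hlower : ∀ x ≥ a, y x = -ρ x → -y' x < ρ' x) :
    ∀ x ≥ a, |y x| < ρ x := by
  have hlt := lt_on_Ici_of_deriv_lt_deriv_boundary hy hρ (abs_lt.1 ha).2 hupper
  have hgt := lt_on_Ici_of_deriv_lt_deriv_boundary (fun x hx => (hy x hx).neg) hρ
    (neg_lt.1 (abs_lt.1 ha).1) fun x hx h => hlower x hx (neg_eq_iff_eq_neg.1 h)
  exact fun x hx => abs_lt.2 ⟨neg_lt.1 (hgt x hx), hlt x hx⟩

noncomputable def funnel (p q μ t : ℝ) : ℝ := (p - q) * exp (-μ * t) + q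

section funnel

variable {p q μ : ℝ}

theorem le_funnel (hqp : q ≤ p) (t : ℝ) : q ≤ funnel p q μ t := by
  unfold funnel
  nlinarith [exp_pos (-μ * t)]

theorem funnel_pos (hq : 0 < q) (hqp : q ≤ p) (t : ℝ) : 0 < funnel p q μ t :=
  hq.trans_le (le_funnel hqp t)

theorem hasDerivAt_funnel (t : ℝ) :
    HasDerivAt (funnel p q μ) (-(μ * (p - q) * exp (-μ * t))) t := by
  have hlin : HasDerivAt (fun s => -μ * s) (-μ) t := by
    simpa using (hasDerivAt_id t).const_mul (-μ)
  exact ((hlin.exp.const_mul (p - q)).add_const q).congr_deriv (by ring)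

theorem funnel_decay_rate_le (hqp : q ≤ p) (hμ : 0 ≤ μ) {t : ℝ} (ht : 0 ≤ t) :
    μ * (p - q) * exp (-μ * t) ≤ μ * (p - q) :=
  mul_le_of_le_one_right (mul_nonneg hμ (sub_nonneg.2 hqp))
    (exp_le_one_iff.2 (by nlinarith))

end funnel

theorem stageI_plasma_insulin_funnel_invariance_general
    -- the bounded transformation function Ψ
    (Ψ : ℝ → ℝ)
    (hΨ0 : ∀ s ≤ (0 : ℝ), Ψ s = 0)
    (hΨ1 : ∀ s ≥ (1 : ℝ), Ψ s = 1)
    -- parameters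
    (n nlow nbar V I_b κ₂ ubar Δ_I Δ'_I M_I : ℝ)
    (hnlow : 0 < nlow) (hn : nlow ≤ n ∧ n ≤ nbar)
    -- funnel parameters
    (p_I q_I μ_I : ℝ) (hqI : 0 < q_I) (hpI : q_I < p_I) (hμI : 0 < μ_I)
    -- signals and definitions
    (I Ihat Ihat' Iref Iref' : ℝ → ℝ)
    (ρI : ℝ → ℝ) (hρIdef : ∀ t, ρI t = (p_I - q_I) * Real.exp (-μ_I * t) + q_I)
    (eI : ℝ → ℝ) (heI : ∀ t, eI t = (Iref t - Ihat t) / ρI t)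
    (u : ℝ → ℝ) (hudef : ∀ t, u t = ubar * Ψ (eI t))
    -- plasma insulin dynamics on t ≥ 0, with I + I_b ≥ 0
    (hIpos : ∀ t ≥ (0 : ℝ), 0 ≤ I t + I_b)
    -- estimate: differentiable with bounded position/derivative errors
    (hIhat : ∀ t ≥ (0 : ℝ), HasDerivAt Ihat (Ihat' t) t)
    (hIerr : ∀ t ≥ (0 : ℝ), |I t - Ihat t| ≤ Δ_I)
    (hIerr' : ∀ t ≥ (0 : ℝ), |(-(n * (I t + I_b)) + u t / V) - Ihat' t| ≤ Δ'_I)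
    -- reference: differentiable, bounded, with bounded derivative
    (hIrefrange : ∀ t ≥ (0 : ℝ), 0 ≤ Iref t ∧ Iref t ≤ κ₂)
    (hIref' : ∀ t ≥ (0 : ℝ), HasDerivAt Iref (Iref' t) t)
    (hIrefbnd : ∀ t ≥ (0 : ℝ), |Iref' t| ≤ M_I)
    -- initial condition
    (hinitI : |eI 0| < 1)
    -- feasibility conditions
    (hFC3a : ubar / V - nbar * (κ₂ - q_I + Δ_I + I_b)
        > M_I + μ_I * (p_I - q_I) + Δ'_I)
    (hFC3b : nlow * (q_I - Δ_I + I_b) > M_I + μ_I * (p_I - q_I) + Δ'_I) :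
    ∀ t ≥ (0 : ℝ), |Iref t - Ihat t| < ρI t := by

  obtain rfl : ρI = funnel p_I q_I μ_I := funext hρIdef
  have hρpos := funnel_pos (μ := μ_I) hqI hpI.le
  refine abs_lt_on_Ici_of_deriv_lt_deriv_boundary
    (fun x hx => (hIref' x hx).sub (hIhat x hx)) (fun x _ => hasDerivAt_funnel x) ?_ ?_ ?_
  · rwa [heI, abs_div, abs_of_pos (hρpos 0), div_lt_one (hρpos 0)] at hinitI
  · intro x hx hbd
    have hu : u x = ubar := by
      rw [hudef, heI, hbd, div_self (hρpos x).ne', hΨ1 1 le_rfl, mul_one]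
    have hI : I x ≤ κ₂ - q_I + Δ_I := by
      linarith [le_funnel (μ := μ_I) hpI.le x, (abs_le.1 (hIerr x hx)).2, (hIrefrange x hx).2]
    have hclear : n * (I x + I_b) ≤ nbar * (κ₂ - q_I + Δ_I + I_b) :=
      mul_le_mul hn.2 (by linarith) (hIpos x hx) (hnlow.le.trans (hn.1.trans hn.2))
    have herr := abs_le.1 (hIerr' x hx)
    rw [hu] at herr
    linarith [(abs_le.1 (hIrefbnd x hx)).2, funnel_decay_rate_le hpI.le hμI.le hx]
  · intro x hx hbd
    have hu : u x = 0 := by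
      rw [hudef, heI, hbd, neg_div, div_self (hρpos x).ne', hΨ0 (-1) (by norm_num), mul_zero]
    have hI : q_I - Δ_I ≤ I x := by
      linarith [le_funnel (μ := μ_I) hpI.le x, (abs_le.1 (hIerr x hx)).1, (hIrefrange x hx).1]
    have hclear : nlow * (q_I - Δ_I + I_b) ≤ n * (I x + I_b) :=
      (mul_le_mul_of_nonneg_left (by linarith) hnlow.le).trans
        (mul_le_mul_of_nonneg_right hn.1 (hIpos x hx))
    have herr := abs_le.1 (hIerr' x hx)
    rw [hu, zero_div] at herr
    linarith [(abs_le.1 (hIrefbnd x hx)).1, funnel_decay_rate_le hpI.le hμI.le hx]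

/-- **Stage I of the proof of Theorem 1: invariance of the plasma-insulin
funnel.** For the plasma insulin dynamics `İ = −n(I + I_b) + u/V` with the
control `u(t) = ū·Ψ(e_I(t))`, bounded estimation errors, and feasibility
conditions FC3a–FC3b, the tracking error `I_ref − Î` stays strictly inside the
funnel `ρ_I` for all `t ≥ 0`. -/
theorem stageI_plasma_insulin_funnel_invariance
    -- the bounded transformation function Ψ
    (Ψ : ℝ → ℝ)
    (hΨC1 : ContDiff ℝ 1 Ψ)
    (hΨmono : Monotone Ψ)
    (hΨ0 : ∀ s ≤ (0 : ℝ), Ψ s = 0)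
    (hΨ1 : ∀ s ≥ (1 : ℝ), Ψ s = 1)
    (hΨrange : ∀ s, 0 ≤ Ψ s ∧ Ψ s ≤ 1)
    -- parameters
    (n nlow nbar V I_b κ₂ ubar Δ_I Δ'_I M_I : ℝ)
    (hnlow : 0 < nlow) (hn : nlow ≤ n ∧ n ≤ nbar)
    (hV : 0 < V) (hIb : 0 < I_b) (hκ₂ : 0 < κ₂) (hubar : 0 < ubar)
    (hΔI : 0 < Δ_I) (hΔ'I : 0 < Δ'_I) (hMI : 0 < M_I)
    -- funnel parameters
    (p_I q_I μ_I : ℝ) (hqI : 0 < q_I) (hpI : q_I < p_I) (hμI : 0 < μ_I)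
    -- signals and definitions
    (I Ihat Ihat' Iref Iref' : ℝ → ℝ)
    (ρI : ℝ → ℝ) (hρIdef : ∀ t, ρI t = (p_I - q_I) * Real.exp (-μ_I * t) + q_I)
    (eI : ℝ → ℝ) (heI : ∀ t, eI t = (Iref t - Ihat t) / ρI t)
    (u : ℝ → ℝ) (hudef : ∀ t, u t = ubar * Ψ (eI t))
    -- plasma insulin dynamics on t ≥ 0, with I + I_b ≥ 0
    (hdynI : ∀ t ≥ (0 : ℝ), HasDerivAt I (-(n * (I t + I_b)) + u t / V) t)
    (hIpos : ∀ t ≥ (0 : ℝ), 0 ≤ I t + I_b)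
    -- estimate: differentiable with bounded position/derivative errors
    (hIhat : ∀ t ≥ (0 : ℝ), HasDerivAt Ihat (Ihat' t) t)
    (hIerr : ∀ t ≥ (0 : ℝ), |I t - Ihat t| ≤ Δ_I)
    (hIerr' : ∀ t ≥ (0 : ℝ), |(-(n * (I t + I_b)) + u t / V) - Ihat' t| ≤ Δ'_I)
    -- reference: differentiable, bounded, with bounded derivative
    (hIrefrange : ∀ t ≥ (0 : ℝ), 0 ≤ Iref t ∧ Iref t ≤ κ₂)
    (hIref' : ∀ t ≥ (0 : ℝ), HasDerivAt Iref (Iref' t) t)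
    (hIrefbnd : ∀ t ≥ (0 : ℝ), |Iref' t| ≤ M_I)
    -- initial condition
    (hinitI : |eI 0| < 1)
    -- feasibility conditions
    (hFC3a : ubar / V - nbar * (κ₂ - q_I + Δ_I + I_b)
        > M_I + μ_I * (p_I - q_I) + Δ'_I)
    (hFC3b : nlow * (q_I - Δ_I + I_b) > M_I + μ_I * (p_I - q_I) + Δ'_I) :
    ∀ t ≥ (0 : ℝ), |Iref t - Ihat t| < ρI t :=
  stageI_plasma_insulin_funnel_invariance_general Ψ hΨ0 hΨ1 n nlow nbar V I_b κ₂ ubar Δ_I Δ'_I M_I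
    hnlow hn p_I q_I μ_I hqI hpI hμI I Ihat Ihat' Iref Iref' ρI hρIdef eI heI u hudef hIpos hIhat
    hIerr hIerr' hIrefrange hIref' hIrefbnd hinitI hFC3a hFC3b
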